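/- arXiv:1503.05208 — 5 statements merged into one kernel-verified Lean document; each statement's English description precedes it below -/
import Mathlib

section
/- Let A, B, C be positive real numbers, and define v₁ = (A − B)/(A + B), v₂ = (B − C)/(B + C), v₃ = (A − C)/(A + C). Then v₃ = (v₁ + v₂)/(1 + v₁v₂). -/
/-!
Over the common denominator `(A + B)(B + C)` one finds `v₁ + v₂ = 2B(A - C)` and
`1 + v₁v₂ = 2B(A + C)`, so their quotient is `v₃`. Conceptually, `(a - b)/(a + b)` is
`tanh (½ log (a/b))`: the rapidities `½ log (A/B)` and `½ log (B/C)` add up to `½ log (A/C)`.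
-/

section

variable {K : Type*} [Field K]

def spectroscopicVelocity (a b : K) : K := (a - b) / (a + b)

theorem spectroscopicVelocity_add_spectroscopicVelocity {a b c : K}
    (hab : a + b ≠ 0) (hbc : b + c ≠ 0) :
    spectroscopicVelocity a b + spectroscopicVelocity b c
      = 2 * b * (a - c) / ((a + b) * (b + c)) := by
  unfold spectroscopicVelocity
  field_simp
  ring

theorem one_add_spectroscopicVelocity_mul_spectroscopicVelocity {a b c : K}
    (hab : a + b ≠ 0) (hbc : b + c ≠ 0) :
    1 + spectroscopicVelocity a b * spectroscopicVelocity b c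
      = 2 * b * (a + c) / ((a + b) * (b + c)) := by
  unfold spectroscopicVelocity
  field_simp
  ring

theorem spectroscopicVelocity_eq_relativistic_add {a b c : K} (h2 : (2 : K) ≠ 0)
    (hb : b ≠ 0) (hab : a + b ≠ 0) (hbc : b + c ≠ 0) :
    spectroscopicVelocity a c
      = (spectroscopicVelocity a b + spectroscopicVelocity b c)
          / (1 + spectroscopicVelocity a b * spectroscopicVelocity b c) := by
  have hfactor : 2 * b / ((a + b) * (b + c)) ≠ 0 :=
    div_ne_zero (mul_ne_zero h2 hb) (mul_ne_zero hab hbc)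
  rw [spectroscopicVelocity_add_spectroscopicVelocity hab hbc,
    one_add_spectroscopicVelocity_mul_spectroscopicVelocity hab hbc,
    mul_div_right_comm, mul_div_right_comm (2 * b), mul_div_mul_left _ _ hfactor]
  rfl

end

theorem spectroscopic_velocity_addition
    (A B C : ℝ) (hA : 0 < A) (hB : 0 < B) (hC : 0 < C)
    (v₁ v₂ v₃ : ℝ)
    (hv₁ : v₁ = (A - B) / (A + B))
    (hv₂ : v₂ = (B - C) / (B + C))
    (hv₃ : v₃ = (A - C) / (A + C)) :
    v₃ = (v₁ + v₂) / (1 + v₁ * v₂) := by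
  subst hv₁ hv₂ hv₃
  exact spectroscopicVelocity_eq_relativistic_add two_ne_zero hB.ne'
    (by positivity) (by positivity)
end

section
/- Let g₁, g₂, g₃ be real numbers, and let v₁, v₂, v₃ be real numbers with |v₁| < 1, |v₂| < 1, |v₃| < 1 satisfying v₃ = (v₁ + v₂)/(1 + v₁v₂). Define w₁ = −(1/2)·(g₁ + (1 − v₁)/(1 + v₁)), w₂ = −(1/2)·(g₂ + (1 − v₂)/(1 + v₂)), and w₃ = −(1/2)·(g₃ + (1 − v₃)/(1 + v₃)). Then −(2w₃ + g₃) = (2w₁ + g₁)·(2w₂ + g₂). -/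
/-! The relation `2 w + g = -(1 - v) / (1 + v)` turns both sides into Doppler factors
`(1 - v) / (1 + v)`, and the Doppler factor is multiplicative under relativistic velocity
addition (it is `exp (-2 θ)` for the rapidity `θ = artanh v`). -/

noncomputable def dopplerFactor (v : ℝ) : ℝ := (1 - v) / (1 + v)

noncomputable def relativisticAdd (u v : ℝ) : ℝ := (u + v) / (1 + u * v)

theorem dopplerFactor_relativisticAdd {u v : ℝ} (huv : 1 + u * v ≠ 0) :
    dopplerFactor (relativisticAdd u v) = dopplerFactor u * dopplerFactor v := by
  have hsub : 1 - relativisticAdd u v = (1 - u) * (1 - v) / (1 + u * v) := by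
    rw [relativisticAdd]; field_simp; ring
  have hadd : 1 + relativisticAdd u v = (1 + u) * (1 + v) / (1 + u * v) := by
    rw [relativisticAdd]; field_simp; ring
  rw [dopplerFactor, hsub, hadd, div_div_div_cancel_right₀ huv, mul_div_mul_comm]
  rfl

theorem one_add_mul_ne_zero_of_abs_lt_one {u v : ℝ} (hu : |u| < 1) (hv : |v| < 1) :
    1 + u * v ≠ 0 := by
  have huv : |u * v| < 1 := by
    rw [abs_mul]
    exact mul_lt_one_of_nonneg_of_lt_one_left (abs_nonneg u) hu hv.le
  linarith [(abs_lt.mp huv).1]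

theorem neg_two_mul_add_eq_of_eq_neg_half_mul {w g k : ℝ} (hw : w = -(1 / 2) * (g + k)) :
    -(2 * w + g) = k := by
  rw [hw]; ring

theorem astrometric_velocity_addition_general
    (g₁ g₂ g₃ : ℝ) (v₁ v₂ v₃ : ℝ)
    (h₁ : |v₁| < 1) (h₂ : |v₂| < 1)
    (hadd : v₃ = (v₁ + v₂) / (1 + v₁ * v₂))
    (w₁ w₂ w₃ : ℝ)
    (hw₁ : w₁ = -(1 / 2) * (g₁ + (1 - v₁) / (1 + v₁)))
    (hw₂ : w₂ = -(1 / 2) * (g₂ + (1 - v₂) / (1 + v₂)))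
    (hw₃ : w₃ = -(1 / 2) * (g₃ + (1 - v₃) / (1 + v₃))) :
    -(2 * w₃ + g₃) = (2 * w₁ + g₁) * (2 * w₂ + g₂) := by
  have hk₁ : -(2 * w₁ + g₁) = dopplerFactor v₁ := neg_two_mul_add_eq_of_eq_neg_half_mul hw₁
  have hk₂ : -(2 * w₂ + g₂) = dopplerFactor v₂ := neg_two_mul_add_eq_of_eq_neg_half_mul hw₂
  have hk₃ : -(2 * w₃ + g₃) = dopplerFactor v₃ := neg_two_mul_add_eq_of_eq_neg_half_mul hw₃
  have hv₃ : v₃ = relativisticAdd v₁ v₂ := hadd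
  calc -(2 * w₃ + g₃) = dopplerFactor v₁ * dopplerFactor v₂ := by
        rw [hk₃, hv₃, dopplerFactor_relativisticAdd (one_add_mul_ne_zero_of_abs_lt_one h₁ h₂)]
    _ = (2 * w₁ + g₁) * (2 * w₂ + g₂) := by rw [← hk₁, ← hk₂, neg_mul_neg]

theorem astrometric_velocity_addition
    (g₁ g₂ g₃ : ℝ) (v₁ v₂ v₃ : ℝ)
    (h₁ : |v₁| < 1) (h₂ : |v₂| < 1) (h₃ : |v₃| < 1)
    (hadd : v₃ = (v₁ + v₂) / (1 + v₁ * v₂))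
    (w₁ w₂ w₃ : ℝ)
    (hw₁ : w₁ = -(1 / 2) * (g₁ + (1 - v₁) / (1 + v₁)))
    (hw₂ : w₂ = -(1 / 2) * (g₂ + (1 - v₂) / (1 + v₂)))
    (hw₃ : w₃ = -(1 / 2) * (g₃ + (1 - v₃) / (1 + v₃))) :
    -(2 * w₃ + g₃) = (2 * w₁ + g₁) * (2 * w₂ + g₂) :=
  astrometric_velocity_addition_general g₁ g₂ g₃ v₁ v₂ v₃ h₁ h₂ hadd w₁ w₂ w₃ hw₁ hw₂ hw₃
end

section
/- Let v₁, v₂ be real numbers with |v₁| < 1 and |v₂| < 1, let v₃ = (v₁ + v₂)/(1 + v₁v₂), and define w₁ = v₁/(1 + v₁), w₂ = v₂/(1 + v₂), w₃ = v₃/(1 + v₃). Then w₃ = w₁ + w₂ − 2·w₁·w₂. -/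
/-!
The astrometric velocity is `w = (1 - D v) / 2`, where `D v = (1 - v) / (1 + v)` is the squared
Doppler factor. Relativistic velocity addition multiplies Doppler factors, so
`1 - 2 w₃ = (1 - 2 w₁) (1 - 2 w₂)`, which is the claimed formula.
-/

lemma one_add_mul_pos_of_abs_lt_one {a b : ℝ} (ha : |a| < 1) (hb : |b| < 1) : 0 < 1 + a * b := by
  have hab : |a * b| < 1 := by
    rw [abs_mul]
    exact mul_lt_one_of_nonneg_of_lt_one_left (abs_nonneg a) ha hb.le
  linarith [neg_abs_le (a * b)]

lemma one_add_div_one_add_mul {a b : ℝ} (hab : 1 + a * b ≠ 0) :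
    1 + (a + b) / (1 + a * b) = (1 + a) * (1 + b) / (1 + a * b) := by
  field_simp
  ring

lemma one_sub_div_one_add_mul {a b : ℝ} (hab : 1 + a * b ≠ 0) :
    1 - (a + b) / (1 + a * b) = (1 - a) * (1 - b) / (1 + a * b) := by
  field_simp
  ring

lemma one_sub_div_one_add_velocity_add {a b : ℝ} (ha : 1 + a ≠ 0) (hb : 1 + b ≠ 0)
    (hab : 1 + a * b ≠ 0) :
    (1 - (a + b) / (1 + a * b)) / (1 + (a + b) / (1 + a * b)) =
      (1 - a) / (1 + a) * ((1 - b) / (1 + b)) := by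
  rw [one_sub_div_one_add_mul hab, one_add_div_one_add_mul hab]
  field_simp

lemma one_sub_two_mul_div_one_add {v : ℝ} (hv : 1 + v ≠ 0) :
    1 - 2 * (v / (1 + v)) = (1 - v) / (1 + v) := by
  field_simp
  ring

theorem milne_astrometric_velocity_addition
    (v₁ v₂ : ℝ) (h₁ : |v₁| < 1) (h₂ : |v₂| < 1)
    (v₃ : ℝ) (hv₃ : v₃ = (v₁ + v₂) / (1 + v₁ * v₂))
    (w₁ w₂ w₃ : ℝ)
    (hw₁ : w₁ = v₁ / (1 + v₁)) (hw₂ : w₂ = v₂ / (1 + v₂))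
    (hw₃ : w₃ = v₃ / (1 + v₃)) :
    w₃ = w₁ + w₂ - 2 * w₁ * w₂ := by
  have hv₁ : 1 + v₁ ≠ 0 := by linarith [neg_abs_le v₁]
  have hv₂ : 1 + v₂ ≠ 0 := by linarith [neg_abs_le v₂]
  have hv₁₂ : 1 + v₁ * v₂ ≠ 0 := (one_add_mul_pos_of_abs_lt_one h₁ h₂).ne'
  have hv₃' : 1 + v₃ ≠ 0 := by
    rw [hv₃, one_add_div_one_add_mul hv₁₂]
    exact div_ne_zero (mul_ne_zero hv₁ hv₂) hv₁₂
  have doppler : 1 - 2 * w₃ = (1 - 2 * w₁) * (1 - 2 * w₂) := by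
    rw [hw₁, hw₂, hw₃, one_sub_two_mul_div_one_add hv₁, one_sub_two_mul_div_one_add hv₂,
      one_sub_two_mul_div_one_add hv₃', hv₃, one_sub_div_one_add_velocity_add hv₁ hv₂ hv₁₂]
  linarith
end

section
/- Let τ₀ > 0 and let χ₁, χ₂ be real numbers. Define v₁ = χ₁/(3·τ₀^(2/3)) and assume |v₁| < 1. Let τ₁ = (1 − v₁²)^(3/2)·τ₀, and define v₂ = (χ₂ − χ₁)/(3·τ₁^(2/3)) and v₃ = χ₂/(3·τ₀^(2/3)). Then v₃ = v₁ + (1 − v₁²)·v₂. -/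
/-! The Hubble velocity `χ / (3 τ^(2/3))` is additive in `χ`, and rescaling the observer's time by
`γ^(3/2)` divides it by `γ`. With `γ = 1 - v₁²` this gives `(1 - v₁²) v₂ = v₃ - v₁`. -/

open Real

noncomputable def hubbleVelocity (τ χ : ℝ) : ℝ := χ / (3 * τ ^ ((2 : ℝ) / 3))

lemma hubbleVelocity_add (τ χ χ' : ℝ) :
    hubbleVelocity τ (χ + χ') = hubbleVelocity τ χ + hubbleVelocity τ χ' :=
  add_div _ _ _

lemma rpow_mul_rpow_of_mul_eq_one {a t p q : ℝ} (ha : 0 ≤ a) (ht : 0 ≤ t) (hpq : p * q = 1) :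
    (a ^ p * t) ^ q = a * t ^ q := by
  rw [mul_rpow (rpow_nonneg ha p) ht, ← rpow_mul ha, hpq, rpow_one]

lemma hubbleVelocity_rpow_mul {a τ : ℝ} (ha : 0 ≤ a) (hτ : 0 ≤ τ) (χ : ℝ) :
    hubbleVelocity (a ^ ((3 : ℝ) / 2) * τ) χ = hubbleVelocity τ χ / a := by
  rw [hubbleVelocity, hubbleVelocity, rpow_mul_rpow_of_mul_eq_one ha hτ (by norm_num),
    div_div, mul_comm a, mul_assoc]

theorem power_third_kinematic_addition
    (τ₀ : ℝ) (hτ₀ : 0 < τ₀) (χ₁ χ₂ : ℝ)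
    (v₁ : ℝ) (hv₁ : v₁ = χ₁ / (3 * τ₀ ^ ((2 : ℝ) / 3)))
    (h₁ : |v₁| < 1)
    (τ₁ : ℝ) (hτ₁ : τ₁ = (1 - v₁ ^ 2) ^ ((3 : ℝ) / 2) * τ₀)
    (v₂ v₃ : ℝ)
    (hv₂ : v₂ = (χ₂ - χ₁) / (3 * τ₁ ^ ((2 : ℝ) / 3)))
    (hv₃ : v₃ = χ₂ / (3 * τ₀ ^ ((2 : ℝ) / 3))) :
    v₃ = v₁ + (1 - v₁ ^ 2) * v₂ := by
  have hγ : 0 < 1 - v₁ ^ 2 := by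
    rw [sub_pos, ← one_pow 2]
    exact sq_lt_sq' (abs_lt.mp h₁).1 (abs_lt.mp h₁).2
  have hv₂' : v₂ = hubbleVelocity τ₀ (χ₂ - χ₁) / (1 - v₁ ^ 2) := by
    rw [hv₂, hτ₁, ← hubbleVelocity_rpow_mul hγ.le hτ₀.le, hubbleVelocity]
  calc v₃ = hubbleVelocity τ₀ (χ₁ + (χ₂ - χ₁)) := by rw [hv₃, add_sub_cancel, hubbleVelocity]
    _ = v₁ + (1 - v₁ ^ 2) * v₂ := by
      rw [hubbleVelocity_add, hv₂', mul_div_cancel₀ _ hγ.ne', hv₁, hubbleVelocity]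
end

section
/- For every real number v, let w = v·(1 + v²) and let C = ((−27w + √(27·(4 + 27w²)))/2)^(1/3) (the real cube root). Then C > 0 and v = 1/C − C/3. -/
/-!
Cardano's formula for `x ^ 3 + p * x = w` with `p > 0`. Substituting `x = p / C - C / 3`
turns the cubic into `p ^ 3 / C ^ 3 - C ^ 3 / 27 = w`, a quadratic in `C ^ 3` whose positive
root is `u = radicand p w`; so `p / u ^ (1/3) - u ^ (1/3) / 3` is a root of the cubic, and
since `x ↦ x ^ 3 + p * x` is strictly increasing it is the only one.
-/

namespace Cardano

variable {p : ℝ}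

lemma strictMono_cube_add_mul (hp : 0 ≤ p) : StrictMono fun x : ℝ => x ^ 3 + p * x :=
  (Odd.strictMono_pow (by decide)).add_monotone fun _ _ h => mul_le_mul_of_nonneg_left h hp

lemma cube_add_mul_vieta {C : ℝ} (hC : C ≠ 0) :
    (p / C - C / 3) ^ 3 + p * (p / C - C / 3) = p ^ 3 / C ^ 3 - C ^ 3 / 27 := by
  field_simp
  ring

noncomputable def radicand (p w : ℝ) : ℝ :=
  (-27 * w + Real.sqrt (27 * (4 * p ^ 3 + 27 * w ^ 2))) / 2

lemma radicand_pos (hp : 0 < p) (w : ℝ) : 0 < radicand p w := by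
  have hdisc : (27 * w) ^ 2 < 27 * (4 * p ^ 3 + 27 * w ^ 2) := by nlinarith [pow_pos hp 3]
  have := Real.lt_sqrt_of_sq_lt hdisc
  unfold radicand
  linarith

lemma radicand_sq_add (hp : 0 ≤ p) (w : ℝ) :
    radicand p w ^ 2 + 27 * w * radicand p w = 27 * p ^ 3 := by
  have hsq := Real.sq_sqrt (show 0 ≤ 27 * (4 * p ^ 3 + 27 * w ^ 2) by positivity)
  unfold radicand
  linear_combination hsq / 4

theorem eq_div_sub_of_cube_add_mul (hp : 0 < p) {v w : ℝ} (hw : v ^ 3 + p * v = w) :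
    0 < radicand p w ^ ((1 : ℝ) / 3) ∧
      v = p / radicand p w ^ ((1 : ℝ) / 3) - radicand p w ^ ((1 : ℝ) / 3) / 3 := by
  set u := radicand p w
  set C := u ^ ((1 : ℝ) / 3)
  have hu : 0 < u := radicand_pos hp w
  have hC : 0 < C := Real.rpow_pos_of_pos hu _
  have hC3 : C ^ 3 = u := by
    show (u ^ ((1 : ℝ) / 3)) ^ 3 = u
    rw [one_div]; exact_mod_cast Real.rpow_inv_natCast_pow hu.le three_ne_zero
  refine ⟨hC, (strictMono_cube_add_mul hp.le).injective ?_⟩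
  show v ^ 3 + p * v = (p / C - C / 3) ^ 3 + p * (p / C - C / 3)
  rw [cube_add_mul_vieta hC.ne', hC3, hw]
  field_simp
  linear_combination radicand_sq_add hp.le w

end Cardano

theorem fermi_inverse_power_third (v : ℝ)
    (w : ℝ) (hw : w = v * (1 + v ^ 2))
    (C : ℝ)
    (hC : C = ((-27 * w + Real.sqrt (27 * (4 + 27 * w ^ 2))) / 2) ^ ((1 : ℝ) / 3)) :
    0 < C ∧ v = 1 / C - C / 3 := by
  have hC' : C = Cardano.radicand 1 w ^ ((1 : ℝ) / 3) := by
    simp only [hC, Cardano.radicand, one_pow, mul_one]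
  rw [hC']
  exact Cardano.eq_div_sub_of_cube_add_mul one_pos (by rw [hw]; ring)
end
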